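/- arXiv:1812.04683 — 4 statements merged into one kernel-verified Lean document; each statement's English description precedes it below -/
import Mathlib

section
/- Let μ be a Borel probability measure on ℝ supported on (0, ∞) (i.e. μ((−∞,0]) = 0) with ∫ λ dμ(λ) < ∞, and suppose that (1 − ∫ λ^θ dμ(λ))/θ converges to a finite real limit as θ → 0⁺. Then (1/θ) ∫ (1 − λ^θ)² dμ(λ) → 0 as θ → 0⁺. -/
/-!
Since `(1 - λ^θ)² = 2 (1 - λ^θ) - (1 - λ^{2θ})` for `λ ≥ 0`, the quantity
`θ⁻¹ ∫ (1 - λ^θ)² dμ` equals `2 f(θ) - 2 f(2θ)` with `f(θ) = (1 - ∫ λ^θ dμ)/θ`,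
and both terms tend to `2S`.
-/

open MeasureTheory Filter Topology

lemma Real.abs_rpow_le_one_add_abs {θ : ℝ} (h0 : 0 ≤ θ) (h1 : θ ≤ 1) (x : ℝ) :
    |x ^ θ| ≤ 1 + |x| := by
  refine (Real.abs_rpow_le_abs_rpow x θ).trans ?_
  rcases le_total |x| 1 with hx | hx
  · linarith [Real.rpow_le_one (abs_nonneg x) hx h0, abs_nonneg x]
  · calc |x| ^ θ ≤ |x| ^ (1 : ℝ) := Real.rpow_le_rpow_of_exponent_le hx h1
      _ ≤ 1 + |x| := by rw [Real.rpow_one]; linarith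

lemma MeasureTheory.Integrable.rpow_of_integrable_id {μ : Measure ℝ} [IsFiniteMeasure μ]
    (hmom : Integrable (fun x : ℝ => x) μ) {θ : ℝ} (h0 : 0 ≤ θ) (h1 : θ ≤ 1) :
    Integrable (fun x : ℝ => x ^ θ) μ :=
  ((integrable_const 1).add hmom.abs).mono
    (measurable_id.pow_const θ).aestronglyMeasurable
    (ae_of_all _ fun x => by
      simpa [abs_of_nonneg (add_nonneg zero_le_one (abs_nonneg x))]
        using Real.abs_rpow_le_one_add_abs h0 h1 x)

lemma Real.sq_one_sub_rpow {x : ℝ} (hx : 0 ≤ x) (θ : ℝ) :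
    (1 - x ^ θ) ^ 2 = 2 * (1 - x ^ θ) - (1 - x ^ (2 * θ)) := by
  rw [mul_comm 2 θ, Real.rpow_mul hx, Real.rpow_two]
  ring

lemma MeasureTheory.integral_sq_one_sub_rpow {μ : Measure ℝ} [IsProbabilityMeasure μ]
    (hnonneg : ∀ᵐ x ∂μ, 0 ≤ x) {θ : ℝ} (hθ : Integrable (fun x : ℝ => x ^ θ) μ)
    (h2θ : Integrable (fun x : ℝ => x ^ (2 * θ)) μ) :
    ∫ x, (1 - x ^ θ) ^ 2 ∂μ = 2 * (1 - ∫ x, x ^ θ ∂μ) - (1 - ∫ x, x ^ (2 * θ) ∂μ) := by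
  have hone := integrable_const (μ := μ) (1 : ℝ)
  have hfirst : Integrable (fun x : ℝ => 2 * (1 - x ^ θ)) μ := (hone.sub hθ).const_mul 2
  have hsecond : Integrable (fun x : ℝ => 1 - x ^ (2 * θ)) μ := hone.sub h2θ
  rw [integral_congr_ae (hnonneg.mono fun x hx => Real.sq_one_sub_rpow hx θ),
    integral_sub hfirst hsecond, integral_const_mul,
    integral_sub hone hθ, integral_sub hone h2θ]
  simp

lemma Filter.Tendsto.sub_comp_two_mul_nhdsGT {f : ℝ → ℝ} {S : ℝ}
    (hf : Tendsto f (𝓝[>] 0) (𝓝 S)) :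
    Tendsto (fun θ => 2 * f θ - 2 * f (2 * θ)) (𝓝[>] 0) (𝓝 0) := by
  have htwo : Tendsto (fun θ : ℝ => 2 * θ) (𝓝[>] 0) (𝓝[>] 0) := by
    simpa only [comap_mulLeft_nhdsGT_zero (two_pos : (0 : ℝ) < 2)] using
      tendsto_comap (f := fun θ : ℝ => 2 * θ) (x := 𝓝[>] 0)
  simpa using (hf.const_mul 2).sub ((hf.comp htwo).const_mul 2)

/-- Let `μ` be a Borel probability measure on `ℝ` supported on `(0, ∞)` with finite
first moment, and suppose `(1 − ∫ λ^θ dμ)/θ` converges to a finite real limit as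
`θ → 0⁺`.  Then `(1/θ) ∫ (1 − λ^θ)² dμ(λ) → 0` as `θ → 0⁺`. -/
theorem tendsto_integral_sq_one_sub_rpow (μ : Measure ℝ) [IsProbabilityMeasure μ]
    (hsupp : μ (Set.Iic 0) = 0)
    (hmom : Integrable (fun x : ℝ => x) μ)
    (S : ℝ)
    (hlim : Tendsto (fun θ : ℝ => (1 - ∫ x, x ^ θ ∂μ) / θ)
      (nhdsWithin 0 (Set.Ioi 0)) (nhds S)) :
    Tendsto (fun θ : ℝ => θ⁻¹ * ∫ x, (1 - x ^ θ) ^ 2 ∂μ)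
      (nhdsWithin 0 (Set.Ioi 0)) (nhds 0) := by
  have hnonneg : ∀ᵐ x ∂μ, 0 ≤ x :=
    ae_iff.2 (measure_mono_null (fun x hx => (not_le.1 hx).le) hsupp)
  have hsmall : ∀ᶠ θ : ℝ in 𝓝[>] 0, θ ∈ Set.Ioo 0 (1 / 2) :=
    Ioo_mem_nhdsGT (by norm_num)
  refine hlim.sub_comp_two_mul_nhdsGT.congr' (hsmall.mono fun θ ⟨hθ0, hθ1⟩ => ?_)
  change _ = θ⁻¹ * _
  rw [integral_sq_one_sub_rpow hnonneg (hmom.rpow_of_integrable_id hθ0.le (by linarith))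
    (hmom.rpow_of_integrable_id (by linarith) (by linarith))]
  field_simp
end

section
/- Let μ be a finite Borel measure on ℝ supported on [0, ∞) (i.e. μ((−∞,0)) = 0) with ∫ λ dμ(λ) < ∞, and let a > 0. Then (1/θ) ∫ |1 − exp(i a λ (e^{2πiθ} − 1))|² dμ(λ) → 0 as θ → 0⁺. -/
open MeasureTheory Filter

/-!
Write `w = i a λ (e^{2πiθ} − 1)`. For `0 ≤ θ ≤ 1/2` and `λ ≥ 0` we have `Re w ≤ 0` and
`|w| ≤ 2π a λ θ`, and on the left half-plane `|1 − e^w| ≤ min(2, |w|)` because `|e^z| ≤ 1`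
there (the bound by `|w|` is the mean value theorem). Hence
`θ⁻¹ |1 − e^w|² ≤ 2θ⁻¹|w| ≤ 4π a λ`, which is integrable by the first-moment hypothesis, while
`θ⁻¹ |1 − e^w|² ≤ θ⁻¹|w|² ≤ 4π² a² λ² θ → 0` pointwise; dominated convergence concludes.
-/

namespace Complex

theorem norm_one_sub_exp_le_norm_of_re_nonpos {z : ℂ} (hz : z.re ≤ 0) : ‖1 - exp z‖ ≤ ‖z‖ := by
  rw [norm_sub_rev]
  have hderiv : ∀ w ∈ {c : ℂ | c.re ≤ 0}, ‖deriv exp w‖ ≤ 1 := fun w hw => by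
    rw [deriv_exp, norm_exp]
    exact Real.exp_le_one_iff.mpr hw
  simpa using Convex.norm_image_sub_le_of_norm_deriv_le (fun w _ => differentiableAt_exp) hderiv
    (convex_halfSpace_re_le 0) (show (0 : ℂ).re ≤ 0 by simp) hz

theorem norm_one_sub_exp_le_two_of_re_nonpos {z : ℂ} (hz : z.re ≤ 0) : ‖1 - exp z‖ ≤ 2 := by
  calc ‖1 - exp z‖ ≤ ‖(1 : ℂ)‖ + ‖exp z‖ := norm_sub_le _ _
    _ ≤ 2 := by
      rw [norm_one, norm_exp]
      linarith [Real.exp_le_one_iff.mpr hz]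

theorem sq_norm_one_sub_exp_le_two_mul_norm_of_re_nonpos {z : ℂ} (hz : z.re ≤ 0) :
    ‖1 - exp z‖ ^ 2 ≤ 2 * ‖z‖ := by
  rw [sq]
  exact mul_le_mul (norm_one_sub_exp_le_two_of_re_nonpos hz)
    (norm_one_sub_exp_le_norm_of_re_nonpos hz) (norm_nonneg _) zero_le_two

end Complex

section ModularTranslation

open Complex

variable {c θ : ℝ}

theorem re_I_mul_exp_two_pi_I_mul_sub_one_nonpos (hc : 0 ≤ c) (hθ₀ : 0 ≤ θ)
    (hθ₁ : θ ≤ 1 / 2) : (I * c * (exp (2 * Real.pi * I * θ) - 1)).re ≤ 0 := by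
  have hsin : 0 ≤ Real.sin (2 * Real.pi * θ) :=
    Real.sin_nonneg_of_nonneg_of_le_pi (by positivity) (by nlinarith [Real.pi_pos])
  have hre : (I * c * (exp (2 * Real.pi * I * θ) - 1)).re = -(c * Real.sin (2 * Real.pi * θ)) := by
    rw [show (2 * Real.pi * I * θ : ℂ) = ((2 * Real.pi * θ : ℝ) : ℂ) * I by push_cast; ring]
    simp only [mul_re, I_re, I_im, ofReal_re, ofReal_im, sub_re, one_re, exp_ofReal_mul_I_re,
      exp_ofReal_mul_I_im, sub_im, one_im, mul_im]
    ring
  rw [hre]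
  exact neg_nonpos.mpr (mul_nonneg hc hsin)

theorem norm_I_mul_exp_two_pi_I_mul_sub_one_le (hc : 0 ≤ c) (hθ : 0 ≤ θ) :
    ‖I * c * (exp (2 * Real.pi * I * θ) - 1)‖ ≤ 2 * Real.pi * c * θ := by
  have hcircle : ‖exp (2 * Real.pi * I * θ) - 1‖ ≤ 2 * Real.pi * θ := by
    simpa [show (2 * Real.pi * I * θ : ℂ) = I * ((2 * Real.pi * θ : ℝ) : ℂ) by push_cast; ring,
      abs_of_nonneg Real.pi_pos.le, abs_of_nonneg hθ] using
      Real.norm_exp_I_mul_ofReal_sub_one_le (x := 2 * Real.pi * θ)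
  rw [norm_mul, norm_mul, norm_I, one_mul, norm_real, Real.norm_of_nonneg hc]
  calc c * ‖exp (2 * Real.pi * I * θ) - 1‖ ≤ c * (2 * Real.pi * θ) :=
        mul_le_mul_of_nonneg_left hcircle hc
    _ = 2 * Real.pi * c * θ := by ring

theorem inv_mul_sq_norm_one_sub_exp_le_four_pi_mul (hc : 0 ≤ c) (hθ : θ ∈ Set.Ioc 0 (1 / 2)) :
    θ⁻¹ * ‖1 - exp (I * c * (exp (2 * Real.pi * I * θ) - 1))‖ ^ 2 ≤ 4 * Real.pi * c := by
  obtain ⟨hθ₀, hθ₁⟩ := hθ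
  calc θ⁻¹ * ‖1 - exp (I * c * (exp (2 * Real.pi * I * θ) - 1))‖ ^ 2
      ≤ θ⁻¹ * (2 * (2 * Real.pi * c * θ)) := by
        gcongr
        exact (sq_norm_one_sub_exp_le_two_mul_norm_of_re_nonpos
          (re_I_mul_exp_two_pi_I_mul_sub_one_nonpos hc hθ₀.le hθ₁)).trans
          (by gcongr; exact norm_I_mul_exp_two_pi_I_mul_sub_one_le hc hθ₀.le)
    _ = 4 * Real.pi * c := by field_simp; ring

theorem inv_mul_sq_norm_one_sub_exp_le_sq_mul (hc : 0 ≤ c) (hθ : θ ∈ Set.Ioc 0 (1 / 2)) :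
    θ⁻¹ * ‖1 - exp (I * c * (exp (2 * Real.pi * I * θ) - 1))‖ ^ 2 ≤
      (2 * Real.pi * c) ^ 2 * θ := by
  obtain ⟨hθ₀, hθ₁⟩ := hθ
  calc θ⁻¹ * ‖1 - exp (I * c * (exp (2 * Real.pi * I * θ) - 1))‖ ^ 2
      ≤ θ⁻¹ * (2 * Real.pi * c * θ) ^ 2 := by
        gcongr
        exact (norm_one_sub_exp_le_norm_of_re_nonpos
          (re_I_mul_exp_two_pi_I_mul_sub_one_nonpos hc hθ₀.le hθ₁)).trans
          (norm_I_mul_exp_two_pi_I_mul_sub_one_le hc hθ₀.le)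
    _ = (2 * Real.pi * c) ^ 2 * θ := by field_simp

end ModularTranslation

theorem tendsto_integral_sq_abs_one_sub_exp_general (μ : Measure ℝ)
    (hsupp : μ (Set.Iio 0) = 0)
    (hmom : Integrable (fun x : ℝ => x) μ)
    (a : ℝ) (ha : 0 < a) :
    Tendsto (fun θ : ℝ => θ⁻¹ *
        ∫ x, (‖1 - Complex.exp (Complex.I * (a : ℂ) * (x : ℂ) *
          (Complex.exp (2 * (Real.pi : ℂ) * Complex.I * (θ : ℂ)) - 1))‖) ^ 2 ∂μ)
      (nhdsWithin 0 (Set.Ioi 0)) (nhds 0) := by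
  have hnonneg : ∀ᵐ x ∂μ, 0 ≤ x := by
    rw [ae_iff]
    simp only [not_le]
    exact hsupp
  have hsmall : ∀ᶠ θ in nhdsWithin (0 : ℝ) (Set.Ioi 0), θ ∈ Set.Ioc 0 (1 / 2) :=
    Ioc_mem_nhdsGT_of_mem (by norm_num)
  have hcoef : ∀ x θ : ℝ, Complex.I * a * x * (Complex.exp (2 * Real.pi * Complex.I * θ) - 1) =
      Complex.I * ((a * x : ℝ) : ℂ) * (Complex.exp (2 * Real.pi * Complex.I * θ) - 1) := by
    intro x θ; push_cast; ring
  simp_rw [hcoef, ← integral_const_mul]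
  rw [show (nhds 0 : Filter ℝ) = nhds (∫ _, (0 : ℝ) ∂μ) by simp]
  refine tendsto_integral_filter_of_dominated_convergence (fun x => 4 * Real.pi * (a * x))
    (Eventually.of_forall fun θ => (by fun_prop : Continuous _).aestronglyMeasurable) ?_
    ((hmom.const_mul a).const_mul _) ?_
  · filter_upwards [hsmall] with θ hθ
    filter_upwards [hnonneg] with x hx
    rw [Real.norm_of_nonneg (mul_nonneg (inv_nonneg.2 hθ.1.le) (sq_nonneg _))]
    exact inv_mul_sq_norm_one_sub_exp_le_four_pi_mul (by positivity) hθ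
  · filter_upwards [hnonneg] with x hx
    refine squeeze_zero' ?_ ?_
      (((continuous_const_mul _).tendsto' 0 0 (mul_zero ((2 * Real.pi * (a * x)) ^ 2))).mono_left
        nhdsWithin_le_nhds)
    · filter_upwards [hsmall] with θ hθ
      exact mul_nonneg (inv_nonneg.2 hθ.1.le) (sq_nonneg _)
    · filter_upwards [hsmall] with θ hθ
      exact inv_mul_sq_norm_one_sub_exp_le_sq_mul (by positivity) hθ

/-- Let `μ` be a finite Borel measure on `ℝ` supported on `[0, ∞)` with finite first
moment, and let `a > 0`.  Then
`(1/θ) ∫ |1 − exp(i a λ (e^{2πiθ} − 1))|² dμ(λ) → 0` as `θ → 0⁺`. -/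
theorem tendsto_integral_sq_abs_one_sub_exp (μ : Measure ℝ) [IsFiniteMeasure μ]
    (hsupp : μ (Set.Iio 0) = 0)
    (hmom : Integrable (fun x : ℝ => x) μ)
    (a : ℝ) (ha : 0 < a) :
    Tendsto (fun θ : ℝ => θ⁻¹ *
        ∫ x, (‖1 - Complex.exp (Complex.I * (a : ℂ) * (x : ℂ) *
          (Complex.exp (2 * (Real.pi : ℂ) * Complex.I * (θ : ℂ)) - 1))‖) ^ 2 ∂μ)
      (nhdsWithin 0 (Set.Ioi 0)) (nhds 0) :=
  tendsto_integral_sq_abs_one_sub_exp_general μ hsupp hmom a ha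
end

section
/- Let h : ℝ → ℝ be Lipschitz continuous, and suppose that for every a ≥ 0 one has deriv h (c + a) ≥ deriv h (c) for Lebesgue-almost every c ∈ ℝ. Then h is convex on ℝ. -/
open MeasureTheory Filter Topology intervalIntegral

/-- Difference quotients along `1/(n+1)` converge to the derivative at a
differentiability point. -/
lemma tendsto_diff_quot {f : ℝ → ℝ} {c : ℝ} (hd : DifferentiableAt ℝ f c) :
    Tendsto (fun n : ℕ => (f (c + (n + 1 : ℝ)⁻¹) - f c) / (n + 1 : ℝ)⁻¹)
      atTop (𝓝 (deriv f c)) := by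
  have H : HasDerivAt f (deriv f c) c := hd.hasDerivAt
  rw [hasDerivAt_iff_tendsto_slope] at H
  have hu : Tendsto (fun n : ℕ => (n + 1 : ℝ)⁻¹) atTop (𝓝 0) :=
    tendsto_one_div_add_atTop_nhds_zero_nat.congr (by simp [one_div])
  have hseq : Tendsto (fun n : ℕ => c + (n + 1 : ℝ)⁻¹) atTop (𝓝[≠] c) := by
    rw [tendsto_nhdsWithin_iff]
    constructor
    · simpa using (tendsto_const_nhds.add hu)
    · refine Eventually.of_forall fun n => ?_
      have : (0:ℝ) < (n + 1 : ℝ)⁻¹ := by positivity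
      simp only [Set.mem_compl_iff, Set.mem_singleton_iff]
      intro hcontr
      nlinarith
  have := H.comp hseq
  refine this.congr fun n => ?_
  simp [Function.comp, slope_def_field]

/-- Fundamental theorem of calculus for Lipschitz functions:
`∫ c in x..y, deriv f c = f y - f x`. -/
lemma lipschitz_integral_deriv {f : ℝ → ℝ} {K : NNReal} (hlip : LipschitzWith K f)
    (x y : ℝ) (hxy : x ≤ y) : ∫ c in x..y, deriv f c = f y - f x := by
  have hcont : Continuous f := hlip.continuous
  set u : ℕ → ℝ := fun n => (n + 1 : ℝ)⁻¹ with hu_def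
  have hu_pos : ∀ n, (0:ℝ) < u n := fun n => by positivity
  have hu_tendsto : Tendsto u atTop (𝓝 0) :=
    tendsto_one_div_add_atTop_nhds_zero_nat.congr (by simp [hu_def, one_div])
  set F : ℕ → ℝ → ℝ := fun n c => (f (c + u n) - f c) / u n with hF_def
  -- the interval integral of F n equals difference quotients of the primitive
  have hFi : ∀ n, (∫ c in x..y, F n c) =
      (∫ c in y..(y + u n), f c) / u n - (∫ c in x..(x + u n), f c) / u n := by
    intro n
    have hint : ∀ a b : ℝ, IntervalIntegrable f volume a b := fun a b =>
      hcont.intervalIntegrable a b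
    have h1 : (∫ c in x..y, f (c + u n)) = ∫ c in (x + u n)..(y + u n), f c :=
      integral_comp_add_right f (u n)
    have hint2 : IntervalIntegrable (fun c => f (c + u n)) volume x y :=
      (hcont.comp (continuous_add_right (u n))).intervalIntegrable x y
    have h2 : (∫ c in x..y, F n c) =
        ((∫ c in x..y, f (c + u n)) - ∫ c in x..y, f c) / u n := by
      rw [eq_div_iff (hu_pos n).ne']
      calc (∫ c in x..y, F n c) * u n = ∫ c in x..y, F n c * u n :=
            (intervalIntegral.integral_mul_const _ _).symm
        _ = ∫ c in x..y, (f (c + u n) - f c) := by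
            apply intervalIntegral.integral_congr
            intro c _
            simp only [hF_def]; exact div_mul_cancel₀ _ (hu_pos n).ne'
        _ = (∫ c in x..y, f (c + u n)) - ∫ c in x..y, f c :=
            intervalIntegral.integral_sub hint2 (hint x y)
    rw [h2, h1]
    have e1 : (∫ c in (x + u n)..(y + u n), f c) =
        (∫ c in (x + u n)..y, f c) + ∫ c in y..(y + u n), f c :=
      (integral_add_adjacent_intervals (hint _ _) (hint _ _)).symm
    have e2 : (∫ c in x..y, f c) =
        (∫ c in x..(x + u n), f c) + ∫ c in (x + u n)..y, f c :=
      (integral_add_adjacent_intervals (hint _ _) (hint _ _)).symm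
    rw [e1, e2]
    ring
  -- the primitive H t = ∫ x..t f has derivative f t, so quotients converge
  have hquot : ∀ t : ℝ, Tendsto (fun n => (∫ c in t..(t + u n), f c) / u n)
      atTop (𝓝 (f t)) := by
    intro t
    set H : ℝ → ℝ := fun s => ∫ c in x..s, f c with hH_def
    have hH : HasDerivAt H (f t) t := by
      exact integral_hasDerivAt_right
        (hcont.intervalIntegrable x t : IntervalIntegrable f volume x t)
        (hcont.stronglyMeasurableAtFilter volume (𝓝 t)) hcont.continuousAt
    have hHd : DifferentiableAt ℝ H t := hH.differentiableAt
    have hT := tendsto_diff_quot hHd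
    rw [hH.deriv] at hT
    refine hT.congr fun n => ?_
    have hHeq : H (t + u n) - H t = ∫ c in t..(t + u n), f c := by
      have := integral_add_adjacent_intervals (μ := volume)
        (hcont.intervalIntegrable x t) (hcont.intervalIntegrable t (t + u n))
      simp only [hH_def]
      linarith [this]
    rw [show ((n : ℝ) + 1)⁻¹ = u n from rfl, hHeq]
  -- limit of the RHS
  have hlim_rhs : Tendsto (fun n => (∫ c in y..(y + u n), f c) / u n -
      (∫ c in x..(x + u n), f c) / u n) atTop (𝓝 (f y - f x)) :=
    (hquot y).sub (hquot x)
  have hlim_int : Tendsto (fun n => ∫ c in x..y, F n c) atTop (𝓝 (f y - f x)) := by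
    refine hlim_rhs.congr fun n => (hFi n).symm
  -- dominated convergence
  have hbound : ∀ n c, ‖F n c‖ ≤ (K : ℝ) := by
    intro n c
    rw [hF_def]
    simp only [norm_div, Real.norm_eq_abs]
    rw [abs_of_pos (hu_pos n), div_le_iff₀ (hu_pos n)]
    have := hlip.dist_le_mul (c + u n) c
    rw [Real.dist_eq, Real.dist_eq] at this
    calc |f (c + u n) - f c| ≤ K * |c + u n - c| := this
      _ = K * u n := by rw [add_sub_cancel_left, abs_of_pos (hu_pos n)]
  have hmeas : ∀ n, AEStronglyMeasurable (F n) (volume.restrict (Set.uIoc x y)) := by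
    intro n
    exact ((hcont.comp (by continuity : Continuous fun c : ℝ => c + u n)).sub
      hcont).div_const _ |>.aestronglyMeasurable
  have hae : ∀ᵐ c : ℝ ∂(volume : Measure ℝ),
      c ∈ Set.uIoc x y → Tendsto (fun n => F n c) atTop (𝓝 (deriv f c)) := by
    filter_upwards [hlip.ae_differentiableAt] with c hc _
    exact tendsto_diff_quot hc
  have hdct := intervalIntegral.tendsto_integral_filter_of_dominated_convergence
    (μ := volume) (a := x) (b := y) (F := F) (f := deriv f) (fun _ => (K : ℝ))
    (Eventually.of_forall hmeas)
    (Eventually.of_forall fun n => Eventually.of_forall fun c _ => hbound n c)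
    (intervalIntegrable_const) hae
  exact tendsto_nhds_unique hdct hlim_int

/-- A continuous midpoint-convex function on `ℝ` is convex. -/
lemma convexOn_of_midpoint {f : ℝ → ℝ} (hc : Continuous f)
    (hmid : ∀ u v : ℝ, f ((u + v) / 2) ≤ (f u + f v) / 2) :
    ConvexOn ℝ Set.univ f := by
  -- main claim for x ≤ y
  have main : ∀ x y : ℝ, x < y → ∀ a b : ℝ, 0 ≤ a → 0 ≤ b → a + b = 1 →
      f (a * x + b * y) ≤ a * f x + b * f y := by
    intro x y hxy a b ha hb hab
    set s : ℝ := (f y - f x) / (y - x) with hs_def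
    set l : ℝ → ℝ := fun t => f x + s * (t - x) with hl_def
    set g : ℝ → ℝ := fun t => f t - l t with hg_def
    have hyx : y - x ≠ 0 := sub_ne_zero.2 hxy.ne'
    have hgx : g x = 0 := by simp [hg_def, hl_def]
    have hgy : g y = 0 := by
      simp only [hg_def, hl_def, hs_def]
      field_simp
      ring
    have hgc : Continuous g := by
      apply hc.sub
      exact continuous_const.add (continuous_const.mul (continuous_id.sub continuous_const))
    have hgmid : ∀ u v : ℝ, g ((u + v) / 2) ≤ (g u + g v) / 2 := by
      intro u v
      have := hmid u v
      have hl2 : l ((u + v) / 2) = (l u + l v) / 2 := by simp only [hl_def]; ring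
      simp only [hg_def, hl2]
      linarith
    -- g ≤ 0 on Icc x y
    have hneg : ∀ t ∈ Set.Icc x y, g t ≤ 0 := by
      by_contra hcon
      push_neg at hcon
      obtain ⟨t₀, ht₀mem, ht₀⟩ := hcon
      obtain ⟨c, hcmem, hcmax⟩ := isCompact_Icc.exists_isMaxOn
        (Set.nonempty_Icc.2 hxy.le) hgc.continuousOn
      set M : ℝ := g c with hM_def
      have hMpos : 0 < M := lt_of_lt_of_le ht₀ (hcmax ht₀mem)
      set S : Set ℝ := {t ∈ Set.Icc x y | g t = M} with hS_def
      have hScl : IsClosed S := by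
        apply IsClosed.inter isClosed_Icc
        exact isClosed_eq hgc continuous_const
      have hScomp : IsCompact S :=
        isCompact_Icc.of_isClosed_subset hScl fun t ht => ht.1
      obtain ⟨c', hc'S, hc'g⟩ := hScomp.exists_isGreatest ⟨c, hcmem, rfl⟩
      have hc'mem : c' ∈ Set.Icc x y := hc'S.1
      have hc'M : g c' = M := hc'S.2
      have hc'x : x < c' := by
        rcases lt_or_eq_of_le hc'mem.1 with h | h
        · exact h
        · exfalso; rw [← h, hgx] at hc'M; linarith
      have hc'y : c' < y := by
        rcases lt_or_eq_of_le hc'mem.2 with h | h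
        · exact h
        · exfalso; rw [h, hgy] at hc'M; linarith
      set δ : ℝ := min (c' - x) (y - c') with hδ_def
      have hδpos : 0 < δ := lt_min (by linarith) (by linarith)
      have huv : c' - δ ∈ Set.Icc x y := by
        constructor
        · have := min_le_left (c' - x) (y - c'); simp only [hδ_def]; linarith
        · linarith
      have hv : c' + δ ∈ Set.Icc x y := by
        constructor
        · linarith
        · have := min_le_right (c' - x) (y - c'); simp only [hδ_def]; linarith
      have hmid' := hgmid (c' - δ) (c' + δ)
      have hmideq : ((c' - δ) + (c' + δ)) / 2 = c' := by ring
      rw [hmideq, hc'M] at hmid'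
      have hle1 : g (c' - δ) ≤ M := hcmax huv
      have hlt2 : g (c' + δ) < M := by
        have hle2 : g (c' + δ) ≤ M := hcmax hv
        rcases hle2.lt_or_eq with h | h
        · exact h
        · exfalso
          have : c' + δ ∈ S := ⟨hv, h⟩
          have := hc'g this
          linarith
      clear_value δ M S g l s
      linarith
    -- conclude
    have hx' : x = a * x + b * x := by rw [← add_mul, hab, one_mul]
    have hy' : y = a * y + b * y := by rw [← add_mul, hab, one_mul]
    have htmem : a * x + b * y ∈ Set.Icc x y := by
      constructor
      · calc x = a * x + b * x := hx'
          _ ≤ a * x + b * y := by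
              have := mul_le_mul_of_nonneg_left hxy.le hb; linarith
      · calc a * x + b * y ≤ a * y + b * y := by
              have := mul_le_mul_of_nonneg_left hxy.le ha; linarith
          _ = y := hy'.symm
    have := hneg _ htmem
    have hlval : l (a * x + b * y) = a * f x + b * f y := by
      have e2 : s * (y - x) = f y - f x := div_mul_cancel₀ _ hyx
      simp only [hl_def]
      linear_combination b * e2 + (s * x - f x) * hab
    simp only [hg_def] at this
    linarith [this, hlval.le, hlval.ge]
  refine ⟨convex_univ, ?_⟩
  intro x _ y _ a b ha hb hab
  rcases lt_trichotomy x y with hlt | heq | hgt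
  · simpa using main x y hlt a b ha hb hab
  · subst heq
    have e : a • x + b • x = x := by
      simp only [smul_eq_mul]; rw [← add_mul, hab, one_mul]
    rw [e]
    simp only [smul_eq_mul]
    rw [← add_mul, hab, one_mul]
  · have := main y x hgt b a hb ha (by linarith)
    simpa [add_comm, smul_eq_mul] using this

/-- If `h : ℝ → ℝ` is Lipschitz continuous and for every `a ≥ 0` one has
`deriv h (c + a) ≥ deriv h c` for Lebesgue-almost every `c`, then `h` is convex. -/
theorem convexOn_of_deriv_mono_ae (h : ℝ → ℝ) (K : NNReal) (hlip : LipschitzWith K h)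
    (hmono : ∀ a : ℝ, 0 ≤ a → ∀ᵐ c : ℝ ∂volume, deriv h c ≤ deriv h (c + a)) :
    ConvexOn ℝ Set.univ h := by
  have hcont : Continuous h := hlip.continuous
  have hKbd : ∀ c : ℝ, |deriv h c| ≤ (K : ℝ) := fun c => by
    simpa [Real.norm_eq_abs] using norm_deriv_le_of_lipschitz (x₀ := c) hlip
  have hInt : ∀ (g : ℝ → ℝ) (x y : ℝ), Measurable g → (∀ c, |g c| ≤ (K : ℝ)) →
      IntervalIntegrable g volume x y := by
    intro g x y hm hb
    refine (_root_.intervalIntegrable_const (c := (K : ℝ)) (μ := volume)).mono_fun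
      hm.aestronglyMeasurable (Eventually.of_forall fun c => ?_)
    simpa [Real.norm_eq_abs] using hb c
  -- shift inequality: for x ≤ y and a ≥ 0, h y - h x ≤ h (y+a) - h (x+a)
  have hshift : ∀ x y a : ℝ, x ≤ y → 0 ≤ a → h y - h x ≤ h (y + a) - h (x + a) := by
    intro x y a hxy ha
    have h1 : (∫ c in x..y, deriv h c) = h y - h x := lipschitz_integral_deriv hlip x y hxy
    have h2 : (∫ c in x..y, deriv h (c + a)) = h (y + a) - h (x + a) := by
      rw [integral_comp_add_right (fun c => deriv h c) a]
      exact lipschitz_integral_deriv hlip (x + a) (y + a) (by linarith)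
    rw [← h1, ← h2]
    refine intervalIntegral.integral_mono_ae hxy ?_ ?_ (hmono a ha)
    · exact hInt _ x y (measurable_deriv h) hKbd
    · exact hInt _ x y ((measurable_deriv h).comp (by measurability)) fun c => hKbd (c + a)
  -- midpoint convexity
  have hmid : ∀ u v : ℝ, h ((u + v) / 2) ≤ (h u + h v) / 2 := by
    have key : ∀ u v : ℝ, u ≤ v → h ((u + v) / 2) ≤ (h u + h v) / 2 := by
      intro u v huv
      set m : ℝ := (u + v) / 2 with hm_def
      have hum : u ≤ m := by simp only [hm_def]; linarith
      have hma : 0 ≤ m - u := by linarith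
      have := hshift u m (m - u) hum hma
      have e1 : m + (m - u) = v := by simp only [hm_def]; ring
      have e2 : u + (m - u) = m := by ring
      rw [e1, e2] at this
      linarith
    intro u v
    rcases le_total u v with huv | hvu
    · exact key u v huv
    · have := key v u hvu
      rw [add_comm v u] at this
      linarith
  exact convexOn_of_midpoint hcont hmid
end

section
/- Let f : ℂ → ℂ be entire with f(s + i) = f(s) for all s ∈ ℂ, and suppose there exists C ≥ 0 such that |f(s)| ≤ exp(C · |exp(−2πs)|) for all s ∈ ℂ. Then there exists an entire function g : ℂ → ℂ such that f(s) = g(exp(−2πs)) for all s ∈ ℂ. -/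
/-!
Rotating by `-i` turns `f` into a function of period `1`, so `f s = g (exp (-2πs))` for the
`q`-expansion `g` of the rotated function, which is holomorphic on `ℂ \ {0}`. The growth bound makes
`g` bounded near `q = 0`, so by Riemann's removable singularity theorem `g` is entire.
-/

open Complex Filter Function Periodic

open scoped Real

local notation "I∞" => comap im atTop

lemma Function.Periodic.comp_neg_I_mul {f : ℂ → ℂ} (hf : Periodic f I) :
    Periodic (fun z ↦ f (-I * z)) 1 := by
  simpa using (hf.const_mul (-I)).neg

lemma Function.Periodic.qParam_one_I_mul (s : ℂ) :
    qParam 1 (I * s) = exp (-(2 * π) * s) := by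
  rw [qParam, ofReal_one, div_one]
  congr 1
  ring_nf
  rw [I_sq]
  ring

lemma Function.Periodic.boundedAtFilter_of_norm_le_exp_qParam {h : ℝ} (hh : 0 < h) {F : ℂ → ℂ}
    {C : ℝ} (hF : ∀ z, ‖F z‖ ≤ Real.exp (C * ‖qParam h z‖)) : BoundedAtFilter I∞ F := by
  refine (Asymptotics.isBigO_one_iff ℝ).mpr <|
    isBoundedUnder_of_eventually_le (a := Real.exp |C|) ?_
  filter_upwards [preimage_mem_comap (Ioi_mem_atTop 0)] with z hz
  have hq : ‖qParam h z‖ ≤ 1 := (norm_qParam_lt_one hh hz).le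
  calc ‖F z‖ ≤ Real.exp (C * ‖qParam h z‖) := hF z
    _ ≤ Real.exp |C| := Real.exp_le_exp.mpr <|
      (mul_le_mul_of_nonneg_right (le_abs_self C) (norm_nonneg _)).trans
        (mul_le_of_le_one_right (abs_nonneg C) hq)

lemma Function.Periodic.differentiable_cuspFunction {h : ℝ} (hh : 0 < h) {F : ℂ → ℂ}
    (hF : Periodic F h) (hd : Differentiable ℂ F) (hbd : BoundedAtFilter I∞ F) :
    Differentiable ℂ (cuspFunction h F) := by
  intro q
  rcases eq_or_ne q 0 with rfl | hq
  · exact differentiableAt_cuspFunction_zero hh hF (.of_forall fun z ↦ hd z) hbd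
  · rw [← qParam_right_inv hh.ne' hq]
    exact differentiableAt_cuspFunction hh.ne' hF (hd _)

theorem exists_entire_descend_general (f : ℂ → ℂ) (hf : Differentiable ℂ f)
    (hper : ∀ s : ℂ, f (s + Complex.I) = f s)
    (C : ℝ)
    (hbound : ∀ s : ℂ, ‖f s‖ ≤
      Real.exp (C * ‖Complex.exp (-(2 * (Real.pi : ℂ)) * s)‖)) :
    ∃ g : ℂ → ℂ, Differentiable ℂ g ∧
      ∀ s : ℂ, f s = g (Complex.exp (-(2 * (Real.pi : ℂ)) * s)) := by
  set F : ℂ → ℂ := fun z ↦ f (-I * z)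
  have hF : Periodic F 1 := Periodic.comp_neg_I_mul hper
  have hFbound (z : ℂ) : ‖F z‖ ≤ Real.exp (C * ‖qParam 1 z‖) := by
    have := hbound (-I * z)
    rwa [← qParam_one_I_mul, ← mul_assoc, mul_neg, I_mul_I, neg_neg, one_mul] at this
  have hFdiff : Differentiable ℂ F := hf.comp (differentiable_id.const_mul _)
  refine ⟨cuspFunction 1 F, differentiable_cuspFunction one_pos hF hFdiff
    (boundedAtFilter_of_norm_le_exp_qParam one_pos hFbound), fun s ↦ ?_⟩
  rw [← qParam_one_I_mul, eq_cuspFunction one_ne_zero hF]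
  simp [F, ← mul_assoc]

/-- Descent to the cylinder: if `f` is entire, periodic under `s ↦ s + i`, and satisfies
`|f s| ≤ exp(C |exp(−2πs)|)`, then `f s = g (exp(−2πs))` for some entire function `g`. -/
theorem exists_entire_descend (f : ℂ → ℂ) (hf : Differentiable ℂ f)
    (hper : ∀ s : ℂ, f (s + Complex.I) = f s)
    (C : ℝ) (hC : 0 ≤ C)
    (hbound : ∀ s : ℂ, ‖f s‖ ≤
      Real.exp (C * ‖Complex.exp (-(2 * (Real.pi : ℂ)) * s)‖)) :
    ∃ g : ℂ → ℂ, Differentiable ℂ g ∧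
      ∀ s : ℂ, f s = g (Complex.exp (-(2 * (Real.pi : ℂ)) * s)) :=
  exists_entire_descend_general f hf hper C hbound
end
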